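/- Let (X,Y) be an absolutely continuous random pair with joint CDF F and marginal CDFs F₁, F₂, and let (X_i,Y_i), i=1,...,4, be i.i.d. copies. Then P(max(X₁,X₂) < min(X₃,X₄), max(Y₁,Y₂) < min(Y₃,Y₄)) = ∫ F² d(2F + 2F₁F₂ − 2FF₁ − 2FF₂ + F²), where the integral is with respect to the measure induced by the function (x,y) ↦ 2F(x,y) + 2F₁(x)F₂(y) − 2F(x,y)F₁(x) − 2F(x,y)F₂(y) + F(x,y)². -/

import Mathlib

/-!
Given the second pair of copies, the first two copies fall independently into the open
quadrant below the coordinatewise minimum `m` of the second pair, so the probability is the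
integral of `ν(quadrant below m)²` against the law of `m`. Since `ν` does not charge lines,
the open quadrant has the same mass as the closed one, namely `F m`.
-/

open MeasureTheory Set

section Quadrant

variable {α β : Type*} [MeasurableSpace α] [MeasurableSpace β] [PartialOrder α]
  [PartialOrder β]

theorem measure_Iic_prod_Iic_eq_Iio_prod_Iio {μ : Measure α} {ν : Measure β}
    [NullSingletonClass μ] [NullSingletonClass ν] {ρ : Measure (α × β)}
    (hρ : ρ ≪ μ.prod ν) (x : α) (y : β) : ρ (Iic x ×ˢ Iic y) = ρ (Iio x ×ˢ Iio y) :=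
  measure_congr <| hρ.ae_eq <| (Measure.set_prod_ae_eq Iio_ae_eq_Iic Iio_ae_eq_Iic).symm

variable [TopologicalSpace α] [OrderClosedTopology α] [SecondCountableTopology α]
  [OpensMeasurableSpace α] [TopologicalSpace β] [OrderClosedTopology β]
  [SecondCountableTopology β] [OpensMeasurableSpace β]

theorem measurable_measure_Iic_prod_Iic (ρ : Measure (α × β)) [SFinite ρ] :
    Measurable fun p : α × β => ρ (Iic p.1 ×ˢ Iic p.2) :=
  measurable_measure_prodMk_left (ν := ρ)
    (s := {z : (α × β) × (α × β) | z.2.1 ≤ z.1.1 ∧ z.2.2 ≤ z.1.2})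
    ((measurableSet_le measurable_snd.fst measurable_fst.fst).inter
      (measurableSet_le measurable_snd.snd measurable_fst.snd))

end Quadrant

theorem measurePreserving_finFour_pairs {α : Type*} [MeasurableSpace α] (μ : Measure α)
    [SigmaFinite μ] :
    MeasurePreserving (fun w : Fin 4 → α => ((w 0, w 1), (w 2, w 3)))
      (Measure.pi fun _ => μ) ((μ.prod μ).prod (μ.prod μ)) :=
  (((measurePreserving_piFinTwo fun _ => μ).prod (measurePreserving_piFinTwo fun _ => μ)).comp
    (measurePreserving_sumPiEquivProdPi fun _ : Fin 2 ⊕ Fin 2 => μ)).comp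
    (measurePreserving_piCongrLeft (fun _ : Fin 2 ⊕ Fin 2 => μ) finSumFinEquiv.symm)

section Slices

variable {α β : Type*} [MeasurableSpace α] [MeasurableSpace β] {A : β → Set α}

theorem measurableSet_setOf_pair_mem (hA : MeasurableSet {p : α × β | p.1 ∈ A p.2}) :
    MeasurableSet {r : (α × α) × β | r.1.1 ∈ A r.2 ∧ r.1.2 ∈ A r.2} :=
  (measurable_fst.fst.prodMk measurable_snd hA).inter
    (measurable_fst.snd.prodMk measurable_snd hA)

theorem prod_prod_setOf_pair_mem (μ : Measure α) [SFinite μ] (ρ : Measure β) [SFinite ρ]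
    (hA : MeasurableSet {p : α × β | p.1 ∈ A p.2}) :
    ((μ.prod μ).prod ρ) {r | r.1.1 ∈ A r.2 ∧ r.1.2 ∈ A r.2} =
      ∫⁻ b, μ (A b) ^ 2 ∂ρ := by
  rw [Measure.prod_apply_symm (measurableSet_setOf_pair_mem hA)]
  refine lintegral_congr fun b => ?_
  rw [sq, ← Measure.prod_prod]
  rfl

end Slices

/-- for an absolutely continuous pair `(X,Y)` with law `ν`, joint CDF `F`,
and four i.i.d. copies,
`P(max(X₁,X₂) < min(X₃,X₄), max(Y₁,Y₂) < min(Y₃,Y₄)) = ∫ F² dG`,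
where the Stieltjes measure of `G = 2F + 2F₁F₂ − 2FF₁ − 2FF₂ + F²` is the law of the
coordinatewise minima `(min(X₃,X₄), min(Y₃,Y₄))` of two independent copies. -/
theorem max_min_probability_eq_integral
    (ν : Measure (ℝ × ℝ)) [IsProbabilityMeasure ν] (hac : ν ≪ volume)
    (F : ℝ → ℝ → ℝ)
    (hF : ∀ x y, F x y = (ν (Set.Iic x ×ˢ Set.Iic y)).toReal) :
    ((Measure.pi fun _ : Fin 4 => ν)
        {w | max (w 0).1 (w 1).1 < min (w 2).1 (w 3).1 ∧
             max (w 0).2 (w 1).2 < min (w 2).2 (w 3).2}).toReal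
      = ∫ p : ℝ × ℝ, (F p.1 p.2) ^ 2
          ∂(Measure.map (fun q : (ℝ × ℝ) × (ℝ × ℝ) =>
              (min q.1.1 q.2.1, min q.1.2 q.2.2)) (ν.prod ν)) := by
  set m : (ℝ × ℝ) × (ℝ × ℝ) → ℝ × ℝ := fun q => (min q.1.1 q.2.1, min q.1.2 q.2.2)
  set A : (ℝ × ℝ) × (ℝ × ℝ) → Set (ℝ × ℝ) := fun q => Iio (m q).1 ×ˢ Iio (m q).2
  have hm : Measurable m := by fun_prop
  have hcdf := measurable_measure_Iic_prod_Iic ν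
  have hA : MeasurableSet {p : (ℝ × ℝ) × (ℝ × ℝ) × (ℝ × ℝ) | p.1 ∈ A p.2} :=
    (measurableSet_lt measurable_fst.fst (hm.comp measurable_snd).fst).inter
      (measurableSet_lt measurable_fst.snd (hm.comp measurable_snd).snd)
  have hevent : {w : Fin 4 → ℝ × ℝ | max (w 0).1 (w 1).1 < min (w 2).1 (w 3).1 ∧
      max (w 0).2 (w 1).2 < min (w 2).2 (w 3).2} =
      (fun w => ((w 0, w 1), (w 2, w 3))) ⁻¹' {r | r.1.1 ∈ A r.2 ∧ r.1.2 ∈ A r.2} := by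
    ext w
    simp only [A, m, mem_ofPred_eq, mem_preimage, mem_prod, mem_Iio, max_lt_iff]
    tauto
  calc _ = (((ν.prod ν).prod (ν.prod ν)) {r | r.1.1 ∈ A r.2 ∧ r.1.2 ∈ A r.2}).toReal := by
        rw [hevent, (measurePreserving_finFour_pairs ν).measure_preimage
          (measurableSet_setOf_pair_mem (A := A) hA).nullMeasurableSet]
    _ = (∫⁻ q, ν (Iic (m q).1 ×ˢ Iic (m q).2) ^ 2 ∂(ν.prod ν)).toReal := by
        simp only [prod_prod_setOf_pair_mem ν (ν.prod ν) hA, A,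
          measure_Iic_prod_Iic_eq_Iio_prod_Iio hac]
    _ = ∫ q, (ν (Iic (m q).1 ×ˢ Iic (m q).2)).toReal ^ 2 ∂(ν.prod ν) := by
        simp only [← ENNReal.toReal_pow]
        exact (integral_toReal ((hcdf.comp hm).pow_const 2).aemeasurable
          (.of_forall fun q => ENNReal.pow_lt_top (measure_lt_top ν _))).symm
    _ = _ := by
        simp only [hF]
        rw [integral_map hm.aemeasurable (hcdf.ennreal_toReal.pow_const 2).aestronglyMeasurable]
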